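/- arXiv:1701.00429 — 3 statements merged into one kernel-verified Lean document; each statement's English description precedes it below -/
import Mathlib

section
/- (Lemma 4.9, first inversion formula) For every p ∈ {0, …, n} and every 0 ≤ j ≤ l_p, setting q = a_j^{(p)}, one has l_q† ≥ j and a_j^{(q)†} = p. -/
/-- `d(p) = max { s j : t j ≤ p }`, with `⊥` meaning "undefined" (i.e. `-∞`). -/
noncomputable def dvalue (m : ℕ) (s t : ℕ → ℤ) (p : ℤ) : WithBot ℤ :=
  ((Finset.range m).filter (fun j => t j ≤ p)).sup (fun j => (s j : WithBot ℤ))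

/-- `d†(p) = min { t j : s j ≥ p }`, with `⊤` meaning "undefined" (i.e. `+∞`). -/
noncomputable def ddual (m : ℕ) (s t : ℕ → ℤ) (p : ℤ) : WithTop ℤ :=
  ((Finset.range m).filter (fun j => p ≤ s j)).inf (fun j => (t j : WithTop ℤ))

/-- The extension of `d` to `WithBot ℤ`, sending `⊥` to `⊥`. -/
noncomputable def dW (m : ℕ) (s t : ℕ → ℤ) : WithBot ℤ → WithBot ℤ :=
  WithBot.recBotCoe ⊥ (dvalue m s t)

/-- The extension of `d†` to `WithTop ℤ`, sending `⊤` to `⊤`. -/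
noncomputable def dtW (m : ℕ) (s t : ℕ → ℤ) : WithTop ℤ → WithTop ℤ :=
  WithTop.recTopCoe ⊤ (ddual m s t)

/-- The (total extension of the) sequence `a_i^{(p)}`:
`a_0 = p`, `a_1 = p - 1`, `a_{i+2} = d(a_i)`.  For `i ≤ l_p` this agrees with the
sequence of the paper. -/
noncomputable def aSeq (m : ℕ) (s t : ℕ → ℤ) (p : ℤ) : ℕ → WithBot ℤ
  | 0 => (p : WithBot ℤ)
  | 1 => ((p - 1 : ℤ) : WithBot ℤ)
  | i + 2 => dW m s t (aSeq m s t p i)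

/-- The length `l_p`: `l_0 = 0`, and for `p ≠ 0` it is the least `j ≥ 1` with
`d(a_{j-1}^{(p)}) = d(a_j^{(p)})` (undefined values compared as `⊥`). -/
noncomputable def lSeq (m : ℕ) (s t : ℕ → ℤ) (p : ℤ) : ℕ :=
  if p = 0 then 0
  else sInf {j : ℕ | 1 ≤ j ∧ dW m s t (aSeq m s t p (j - 1)) = dW m s t (aSeq m s t p j)}

/-- The (total extension of the) dual sequence `a_i^{(p)†}`:
`a_0 = p`, `a_1 = p + 1`, `a_{i+2} = d†(a_i)`. -/
noncomputable def aSeqD (m : ℕ) (s t : ℕ → ℤ) (p : ℤ) : ℕ → WithTop ℤ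
  | 0 => (p : WithTop ℤ)
  | 1 => ((p + 1 : ℤ) : WithTop ℤ)
  | i + 2 => dtW m s t (aSeqD m s t p i)

/-- The dual length `l_p†`: `l_n† = 0`, and for `p ≠ n` it is the least `j ≥ 1` with
`d†(a_{j-1}^{(p)†}) = d†(a_j^{(p)†})` (undefined values compared as `⊤`). -/
noncomputable def lSeqD (n : ℤ) (m : ℕ) (s t : ℕ → ℤ) (p : ℤ) : ℕ :=
  if p = n then 0
  else sInf {j : ℕ | 1 ≤ j ∧ dtW m s t (aSeqD m s t p (j - 1)) = dtW m s t (aSeqD m s t p j)}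

/-!
Extended by `⊥` and `⊤`, the maps `d` and `d†` form a Galois connection:
`B ≤ d x ↔ d† B ≤ x`, since both sides say that some interval `[s_k, t_k]` lies in `[B, x]`.
For `j ≤ l_p` the sequence `a^{(p)}` is strictly decreasing up to index `j + 1`, and with
`q = a_j^{(p)}` the Galois connection carries the sandwich `a_{j-i+1} < a_i^{(q)†} ≤ a_{j-i}`
two steps forward. At `i = j` it pins `a_j^{(q)†} = p`, and it makes `a^{(q)†}` strictly
increasing up to index `j + 1`, which forces `l_q† ≥ j`.
-/

section

variable {m : ℕ} {s t : ℕ → ℤ}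

theorem coe_le_dvalue_iff_ddual_le_coe {x B : ℤ} :
    (B : WithBot ℤ) ≤ dvalue m s t x ↔ ddual m s t B ≤ (x : WithTop ℤ) := by
  simp only [dvalue, ddual, Finset.le_sup_iff (WithBot.bot_lt_coe B),
    Finset.inf_le_iff (WithTop.coe_lt_top x), Finset.mem_filter, Finset.mem_range,
    WithBot.coe_le_coe, WithTop.coe_le_coe]
  constructor <;> rintro ⟨k, ⟨hk, h₁⟩, h₂⟩ <;> exact ⟨k, ⟨hk, h₂⟩, h₁⟩

theorem coe_lt_ddual_of_dvalue_lt_coe {x B : ℤ} (h : dvalue m s t x < B) :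
    (x : WithTop ℤ) < ddual m s t B :=
  lt_of_not_ge fun h' => h.not_ge (coe_le_dvalue_iff_ddual_le_coe.2 h')

theorem exists_ddual_eq_coe_mem_Ioc {x y B : ℤ} (hy : dvalue m s t y < B)
    (hx : (B : WithBot ℤ) ≤ dvalue m s t x) :
    ∃ B' : ℤ, ddual m s t B = B' ∧ y < B' ∧ B' ≤ x := by
  obtain ⟨B', hB', hB'x⟩ := WithTop.le_coe_iff.1 (coe_le_dvalue_iff_ddual_le_coe.1 hx)
  have hyB' := coe_lt_ddual_of_dvalue_lt_coe hy
  rw [hB', WithTop.coe_lt_coe] at hyB'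
  exact ⟨B', hB', hyB', hB'x⟩

theorem dvalue_le_sub_two (hlen : ∀ j < m, s j + 2 ≤ t j) (x : ℤ) :
    dvalue m s t x ≤ ((x - 2 : ℤ) : WithBot ℤ) := by
  refine Finset.sup_le fun k hk => ?_
  rw [Finset.mem_filter, Finset.mem_range] at hk
  exact WithBot.coe_le_coe.2 (by linarith [hlen k hk.1])

theorem add_two_le_ddual (hlen : ∀ j < m, s j + 2 ≤ t j) (B : ℤ) :
    ((B + 2 : ℤ) : WithTop ℤ) ≤ ddual m s t B := by
  refine Finset.le_inf fun k hk => ?_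
  rw [Finset.mem_filter, Finset.mem_range] at hk
  exact WithTop.coe_le_coe.2 (by linarith [hlen k hk.1])

theorem dtW_eq_top_of_coe_lt {n : ℤ} (htn : ∀ j < m, t j ≤ n) {b : WithTop ℤ}
    (h : (n : WithTop ℤ) < dtW m s t b) : dtW m s t b = ⊤ := by
  induction b using WithTop.recTopCoe with
  | top => rfl
  | coe B =>
    change ddual m s t B = ⊤
    change (n : WithTop ℤ) < ddual m s t B at h
    refine (Finset.inf_eq_top_iff _ _).2 fun k hk => absurd h (not_lt.2 ?_)
    rw [Finset.mem_filter, Finset.mem_range] at hk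
    exact (Finset.inf_le (f := fun j => (t j : WithTop ℤ)) (by simp [hk])).trans
      (WithTop.coe_le_coe.2 (htn k hk.1))

theorem dvalue_mono : Monotone (dvalue m s t) := fun _ _ hxy =>
  Finset.sup_mono fun _ hk => by
    rw [Finset.mem_filter] at hk ⊢
    exact ⟨hk.1, hk.2.trans hxy⟩

theorem dW_mono : Monotone (dW m s t) := by
  intro x y hxy
  induction x using WithBot.recBotCoe with
  | bot => exact bot_le
  | coe x =>
    obtain ⟨y, rfl, hxy⟩ := WithBot.coe_le_iff.1 hxy
    exact dvalue_mono (WithBot.coe_le_coe.1 hxy)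

theorem add_two_le_dtW (hlen : ∀ j < m, s j + 2 ≤ t j) (b : WithTop ℤ) :
    b + 2 ≤ dtW m s t b := by
  induction b using WithTop.recTopCoe with
  | top => exact le_top
  | coe B => exact_mod_cast add_two_le_ddual hlen B

theorem aSeq_add_two (p : ℤ) (i : ℕ) : aSeq m s t p (i + 2) = dW m s t (aSeq m s t p i) := rfl

theorem aSeqD_add_two (q : ℤ) (i : ℕ) : aSeqD m s t q (i + 2) = dtW m s t (aSeqD m s t q i) :=
  rfl

theorem aSeq_add_two_ne_of_add_two_le_lSeq {p : ℤ} (hp : p ≠ 0) {i : ℕ}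
    (hi : i + 2 ≤ lSeq m s t p) : aSeq m s t p (i + 2) ≠ aSeq m s t p (i + 3) := by
  intro h
  have : lSeq m s t p ≤ i + 1 := by
    rw [lSeq, if_neg hp]
    exact Nat.sInf_le ⟨by omega, h⟩
  omega

theorem aSeq_strictAntiOn (hlen : ∀ j < m, s j + 2 ≤ t j) {p : ℤ} (hp : p ≠ 0) :
    StrictAntiOn (aSeq m s t p) (Set.Iic (lSeq m s t p + 1)) := by
  refine strictAntiOn_Iic_of_succ_lt fun i hi => ?_
  rw [Order.succ_eq_add_one]
  induction i using Nat.twoStepInduction with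
  | zero => exact WithBot.coe_lt_coe.2 (sub_one_lt p)
  | one => exact (dvalue_le_sub_two hlen p).trans_lt (WithBot.coe_lt_coe.2 (by linarith))
  | more i ih _ =>
    exact (dW_mono (ih (by omega)).le).lt_of_ne'
      (aSeq_add_two_ne_of_add_two_le_lSeq hp (by omega))

theorem coe_add_le_aSeqD (hlen : ∀ j < m, s j + 2 ≤ t j) (q : ℤ) (i : ℕ) :
    ((q + i : ℤ) : WithTop ℤ) ≤ aSeqD m s t q i := by
  induction i using Nat.twoStepInduction with
  | zero => simp [aSeqD]
  | one => simp [aSeqD]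
  | more i ih _ =>
    calc ((q + (i + 2 : ℕ) : ℤ) : WithTop ℤ) = ((q + i : ℤ) : WithTop ℤ) + (2 : ℤ) := by
          rw [← WithTop.coe_add]
          congr 1
          push_cast
          ring
      _ ≤ aSeqD m s t q i + (2 : ℤ) := by gcongr
      _ ≤ aSeqD m s t q (i + 2) := add_two_le_dtW hlen _

theorem aSeqD_add_two_eq_top (hlen : ∀ j < m, s j + 2 ≤ t j) {n : ℤ} (htn : ∀ j < m, t j ≤ n)
    {q : ℤ} {i : ℕ} (hi : n < q + i) : aSeqD m s t q (i + 2) = ⊤ :=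
  dtW_eq_top_of_coe_lt htn <|
    (WithTop.coe_lt_coe.2 (by omega)).trans_le (coe_add_le_aSeqD hlen q (i + 2))

theorem le_lSeqD (hlen : ∀ j < m, s j + 2 ≤ t j) {n : ℤ} (htn : ∀ j < m, t j ≤ n) {q : ℤ}
    (hq : q ≠ n) {j : ℕ} (h : ∀ i < j, aSeqD m s t q (i + 1) ≠ aSeqD m s t q (i + 2)) :
    j ≤ lSeqD n m s t q := by
  rw [lSeqD, if_neg hq]
  -- `sInf ∅ = 0`, so the defining set must be shown nonempty: `a^{(q)†}` grows by `2` every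
  -- two steps but its finite values past index `1` are at most `n`, so it reaches `⊤`.
  set K := (n + 1 - q).toNat
  have hK : n < q + K := by
    have := Int.self_le_toNat (n + 1 - q)
    omega
  refine le_csInf ⟨K + 1, by omega, ?_⟩ fun k ⟨hk1, hk⟩ => ?_
  · exact (aSeqD_add_two_eq_top hlen htn hK).trans
      (aSeqD_add_two_eq_top hlen htn (i := K + 1) (by omega)).symm
  · by_contra! hjk
    obtain ⟨i, rfl⟩ : ∃ i, k = i + 1 := ⟨k - 1, by omega⟩
    exact h (i + 1) hjk hk

section Inversion

variable {p q : ℤ} {j : ℕ}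

theorem exists_aSeq_eq_coe (hlen : ∀ j < m, s j + 2 ≤ t j) (hp : p ≠ 0)
    (hj : j ≤ lSeq m s t p) (hq : aSeq m s t p j = q) {k : ℕ} (hk : k ≤ j) :
    ∃ x : ℤ, aSeq m s t p k = x := by
  have hjk : aSeq m s t p j ≤ aSeq m s t p k :=
    (aSeq_strictAntiOn hlen hp).antitoneOn (Set.mem_Iic.2 (by omega)) (Set.mem_Iic.2 (by omega)) hk
  exact WithBot.ne_bot_iff_exists.1 (ne_bot_of_le_ne_bot (hq ▸ WithBot.coe_ne_bot) hjk)
    |>.imp fun _ h => h.symm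

theorem aSeqD_mem_Ioc (hlen : ∀ j < m, s j + 2 ≤ t j) (hp : p ≠ 0)
    (hj : j ≤ lSeq m s t p) (hq : aSeq m s t p j = q) :
    ∀ i ≤ j, ∃ B : ℤ, aSeqD m s t q i = B ∧
      aSeq m s t p (j - i + 1) < B ∧ (B : WithBot ℤ) ≤ aSeq m s t p (j - i) := by
  have hdecr : ∀ k ≤ j, aSeq m s t p (k + 1) < aSeq m s t p k := fun k hk =>
    aSeq_strictAntiOn hlen hp (Set.mem_Iic.2 (by omega)) (Set.mem_Iic.2 (by omega)) (by omega)
  have hcoe := fun {k} => exists_aSeq_eq_coe hlen hp hj hq (k := k)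
  intro i
  induction i using Nat.twoStepInduction with
  | zero =>
    intro _
    refine ⟨q, rfl, ?_, ?_⟩
    · rw [Nat.sub_zero, ← hq]
      exact hdecr j le_rfl
    · rw [Nat.sub_zero, hq]
  | one =>
    intro hj1
    obtain ⟨x, hx⟩ := hcoe (k := j - 1) (by omega)
    have hqx := hdecr (j - 1) (by omega)
    rw [Nat.sub_add_cancel hj1, hq, hx, WithBot.coe_lt_coe] at hqx
    refine ⟨q + 1, rfl, ?_, ?_⟩
    · rw [Nat.sub_add_cancel hj1, hq, WithBot.coe_lt_coe]
      exact lt_add_one q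
    · rw [hx, WithBot.coe_le_coe]
      exact hqx
  | more i ih _ =>
    intro hi
    obtain ⟨B, hB, hlo, hhi⟩ := ih (by omega)
    obtain ⟨x, hx⟩ := hcoe (k := j - (i + 2)) (by omega)
    obtain ⟨y, hy⟩ := hcoe (k := j - (i + 2) + 1) (by omega)
    rw [show j - i = j - (i + 2) + 2 by omega, aSeq_add_two, hx] at hhi
    rw [show j - i + 1 = j - (i + 2) + 1 + 2 by omega, aSeq_add_two, hy] at hlo
    obtain ⟨B', hB', hyB', hB'x⟩ := exists_ddual_eq_coe_mem_Ioc hlo hhi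
    refine ⟨B', by rw [aSeqD_add_two, hB]; exact hB', ?_, ?_⟩
    · rw [hy]
      exact WithBot.coe_lt_coe.2 hyB'
    · rw [hx]
      exact WithBot.coe_le_coe.2 hB'x

theorem aSeqD_eq_coe_of_aSeq_eq (hlen : ∀ j < m, s j + 2 ≤ t j) (hp : p ≠ 0)
    (hj : j ≤ lSeq m s t p) (hq : aSeq m s t p j = q) : aSeqD m s t q j = p := by
  obtain ⟨B, hB, hlo, hhi⟩ := aSeqD_mem_Ioc hlen hp hj hq j le_rfl
  rw [Nat.sub_self] at hlo hhi
  have hpB : p - 1 < B := WithBot.coe_lt_coe.1 hlo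
  have hBp : B ≤ p := WithBot.coe_le_coe.1 hhi
  rw [hB, show B = p by omega]

theorem aSeqD_lt_aSeqD_succ (hlen : ∀ j < m, s j + 2 ≤ t j) (hp : p ≠ 0)
    (hj : j ≤ lSeq m s t p) (hq : aSeq m s t p j = q) (hj1 : 1 ≤ j) {i : ℕ} (hi : i ≤ j) :
    aSeqD m s t q i < aSeqD m s t q (i + 1) := by
  rcases hi.lt_or_eq with hi | rfl
  · obtain ⟨B, hB, -, hhi⟩ := aSeqD_mem_Ioc hlen hp hj hq i hi.le
    obtain ⟨B', hB', hlo', -⟩ := aSeqD_mem_Ioc hlen hp hj hq (i + 1) hi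
    obtain ⟨x, hx⟩ := exists_aSeq_eq_coe hlen hp hj hq (k := j - i) (by omega)
    rw [show j - (i + 1) + 1 = j - i by omega, hx, WithBot.coe_lt_coe] at hlo'
    rw [hx, WithBot.coe_le_coe] at hhi
    rw [hB, hB', WithTop.coe_lt_coe]
    omega
  · obtain ⟨B, hB, hlo, -⟩ := aSeqD_mem_Ioc hlen hp hj hq (i - 1) (by omega)
    rw [show i - (i - 1) + 1 = 0 + 2 by omega, aSeq_add_two] at hlo
    rw [aSeqD_eq_coe_of_aSeq_eq hlen hp hj hq, show i + 1 = i - 1 + 2 by omega, aSeqD_add_two,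
      hB]
    exact coe_lt_ddual_of_dvalue_lt_coe hlo

end Inversion

end

theorem inversion_formula_first_general
    (n : ℤ) (m : ℕ) (s t : ℕ → ℤ)
    (htn : ∀ j : ℕ, j < m → t j ≤ n)
    (hlen : ∀ j : ℕ, j < m → s j + 2 ≤ t j)
    (p : ℤ) (hpn : p ≤ n)
    (j : ℕ) (hj : j ≤ lSeq m s t p)
    (q : ℤ) (hq : aSeq m s t p j = (q : WithBot ℤ)) :
    j ≤ lSeqD n m s t q ∧ aSeqD m s t q j = (p : WithTop ℤ) := by
  rcases j.eq_zero_or_pos with rfl | hj1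
  · exact ⟨Nat.zero_le _, congrArg _ (WithBot.coe_inj.1 hq).symm⟩
  have hp : p ≠ 0 := by
    rintro rfl
    rw [lSeq, if_pos rfl] at hj
    omega
  have hqp : q < p :=
    WithBot.coe_lt_coe.1 <| hq ▸
      aSeq_strictAntiOn hlen hp (Set.mem_Iic.2 (by omega)) (Set.mem_Iic.2 (by omega)) hj1
  refine ⟨le_lSeqD hlen htn (by omega) fun i hi => ?_, aSeqD_eq_coe_of_aSeq_eq hlen hp hj hq⟩
  exact (aSeqD_lt_aSeqD_succ hlen hp hj hq hj1 (i := i + 1) hi).ne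

theorem inversion_formula_first
    (n : ℤ) (m : ℕ) (s t : ℕ → ℤ)
    (hn : 0 ≤ n)
    (hsmono : ∀ i j : ℕ, i < j → j < m → s i < s j)
    (htmono : ∀ i j : ℕ, i < j → j < m → t i < t j)
    (hs0 : ∀ j : ℕ, j < m → 0 ≤ s j)
    (htn : ∀ j : ℕ, j < m → t j ≤ n)
    (hlen : ∀ j : ℕ, j < m → s j + 2 ≤ t j)
    (p : ℤ) (hp0 : 0 ≤ p) (hpn : p ≤ n)
    (j : ℕ) (hj : j ≤ lSeq m s t p)
    (q : ℤ) (hq : aSeq m s t p j = (q : WithBot ℤ)) :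
    j ≤ lSeqD n m s t q ∧ aSeqD m s t q j = (p : WithTop ℤ) :=
  inversion_formula_first_general n m s t htn hlen p hpn j hj q hq
end

section
/- Monotone decreasing chain of the values r_j = d^{j−1}((d†)^j(p) − 1): for every p ∈ {0, …, n} and every integer j ≥ 1, if the iterate (d†)^{j+1}(p) is defined and d^j((d†)^{j+1}(p) − 1) is defined, then d^{j−1}((d†)^j(p) − 1) is also defined and d^j((d†)^{j+1}(p) − 1) ≤ d^{j−1}((d†)^j(p) − 1). Consequently, wherever defined, the values r_j = d^{j−1}((d†)^j(p) − 1) are non-increasing in j and satisfy r_j ≤ d†(p) − 1. -/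
/-- Sends `d†`-values to `d`-inputs: `x ↦ x - 1`, with undefined (`⊤`) mapped to
undefined (`⊥`). -/
noncomputable def shiftDown : WithTop ℤ → WithBot ℤ :=
  WithTop.recTopCoe ⊥ (fun a => ((a - 1 : ℤ) : WithBot ℤ))


/-!
Any `j` with `t j < d†(q)` has `s j < q`, since otherwise `d†(q) ≤ t j`; hence
`d(d†(q) - 1) ≤ q - 1`. Applying the monotone map `d^k` with `q = (d†)^(k+1)(p)` gives
`r_(k+2) ≤ r_(k+1)`, and chaining these steps gives `r_j ≤ r_1 = d†(p) - 1`.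
-/

lemma dW_monotone (m : ℕ) (s t : ℕ → ℤ) : Monotone (dW m s t) := by
  intro x y hxy
  induction x using WithBot.recBotCoe with
  | bot => exact bot_le
  | coe a =>
    obtain ⟨b, rfl, hab⟩ := WithBot.coe_le_iff.mp hxy
    change dvalue m s t a ≤ dvalue m s t b
    exact Finset.sup_mono (Finset.monotone_filter_right _ fun _ _ hj => hj.trans hab)

lemma dvalue_sub_one_le_of_ddual_eq {m : ℕ} {s t : ℕ → ℤ} {q r : ℤ}
    (h : ddual m s t q = r) : dvalue m s t (r - 1) ≤ ((q - 1 : ℤ) : WithBot ℤ) := by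
  refine Finset.sup_le fun i hi => ?_
  rw [Finset.mem_filter, Finset.mem_range] at hi
  have hsi : s i < q := by
    by_contra! hqs
    have hrt : (r : WithTop ℤ) ≤ t i := h ▸ Finset.inf_le (by simp [hi.1, hqs])
    have := WithTop.coe_le_coe.mp hrt
    omega
  exact WithBot.coe_le_coe.mpr (by omega)

lemma dW_shiftDown_dtW_le (m : ℕ) (s t : ℕ → ℤ) (x : WithTop ℤ) :
    dW m s t (shiftDown (dtW m s t x)) ≤ shiftDown x := by
  induction x using WithTop.recTopCoe with
  | top => exact bot_le
  | coe q =>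
    change dW m s t (shiftDown (ddual m s t q)) ≤ ((q - 1 : ℤ) : WithBot ℤ)
    cases h : ddual m s t q with
    | top => exact bot_le
    | coe r => exact dvalue_sub_one_le_of_ddual_eq h

lemma antitone_iterate_dW_shiftDown_iterate_dtW (m : ℕ) (s t : ℕ → ℤ) (x : WithTop ℤ) :
    Antitone fun k => (dW m s t)^[k] (shiftDown ((dtW m s t)^[k + 1] x)) := by
  refine antitone_nat_of_succ_le fun k => ?_
  rw [Function.iterate_succ_apply' (dtW m s t) (k + 1), Function.iterate_succ_apply]
  exact (dW_monotone m s t).iterate k (dW_shiftDown_dtW_le m s t _)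

theorem r_chain_antitone_general
    (m : ℕ) (s t : ℕ → ℤ)
    (p : ℤ) :
    (∀ j : ℕ, 1 ≤ j →
      (dtW m s t)^[j + 1] (p : WithTop ℤ) ≠ ⊤ →
      (dW m s t)^[j] (shiftDown ((dtW m s t)^[j + 1] (p : WithTop ℤ))) ≠ ⊥ →
      (dW m s t)^[j - 1] (shiftDown ((dtW m s t)^[j] (p : WithTop ℤ))) ≠ ⊥ ∧
        (dW m s t)^[j] (shiftDown ((dtW m s t)^[j + 1] (p : WithTop ℤ))) ≤
          (dW m s t)^[j - 1] (shiftDown ((dtW m s t)^[j] (p : WithTop ℤ)))) ∧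
    (∀ j : ℕ, 1 ≤ j →
      (dW m s t)^[j - 1] (shiftDown ((dtW m s t)^[j] (p : WithTop ℤ))) ≠ ⊥ →
      (dW m s t)^[j - 1] (shiftDown ((dtW m s t)^[j] (p : WithTop ℤ))) ≤
        shiftDown (ddual m s t p)) := by
  have hanti := antitone_iterate_dW_shiftDown_iterate_dtW m s t (p : WithTop ℤ)
  refine ⟨fun j hj _ hne => ?_, fun j hj _ => ?_⟩
  · obtain ⟨k, rfl⟩ := Nat.exists_eq_add_of_le' hj
    have hle := hanti k.le_succ
    rw [Nat.add_sub_cancel]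
    exact ⟨fun hbot => hne (le_bot_iff.mp (hbot ▸ hle)), hle⟩
  · obtain ⟨k, rfl⟩ := Nat.exists_eq_add_of_le' hj
    exact hanti k.zero_le

theorem r_chain_antitone
    (n : ℤ) (m : ℕ) (s t : ℕ → ℤ)
    (hn : 0 ≤ n)
    (hsmono : ∀ i j : ℕ, i < j → j < m → s i < s j)
    (htmono : ∀ i j : ℕ, i < j → j < m → t i < t j)
    (hs0 : ∀ j : ℕ, j < m → 0 ≤ s j)
    (htn : ∀ j : ℕ, j < m → t j ≤ n)
    (hlen : ∀ j : ℕ, j < m → s j + 2 ≤ t j)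
    (p : ℤ) (hp0 : 0 ≤ p) (hpn : p ≤ n) :
    (∀ j : ℕ, 1 ≤ j →
      (dtW m s t)^[j + 1] (p : WithTop ℤ) ≠ ⊤ →
      (dW m s t)^[j] (shiftDown ((dtW m s t)^[j + 1] (p : WithTop ℤ))) ≠ ⊥ →
      (dW m s t)^[j - 1] (shiftDown ((dtW m s t)^[j] (p : WithTop ℤ))) ≠ ⊥ ∧
        (dW m s t)^[j] (shiftDown ((dtW m s t)^[j + 1] (p : WithTop ℤ))) ≤
          (dW m s t)^[j - 1] (shiftDown ((dtW m s t)^[j] (p : WithTop ℤ)))) ∧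
    (∀ j : ℕ, 1 ≤ j →
      (dW m s t)^[j - 1] (shiftDown ((dtW m s t)^[j] (p : WithTop ℤ))) ≠ ⊥ →
      (dW m s t)^[j - 1] (shiftDown ((dtW m s t)^[j] (p : WithTop ℤ))) ≤
        shiftDown (ddual m s t p)) :=
  r_chain_antitone_general m s t p
end

section
/- (Dual strict decrease, dual of Lemma 4.4) For every p ∈ {0, …, n} and every index 1 ≤ i ≤ l_p†, the value a_i^{(p)†} is a well-defined integer satisfying a_{i−1}^{(p)†} < a_i^{(p)†} ≤ n; hence the sequence a_0^{(p)†} < a_1^{(p)†} < ⋯ < a_{l_p†}^{(p)†} is strictly increasing and bounded above by n. -/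
/-!
Since `d†` is monotone, the recursion `a_{i+2} = d†(a_i)` propagates `a_i ≤ a_{i+1}` from
`i` to `i + 2`; it starts because `a_0 = p < p + 1 = a_1` and `a_1 = p + 1 < p + 2 ≤ d†(p) = a_2`
(as `t_j ≥ s_j + 2`). So the sequence is weakly increasing, and before the stopping time the
inequalities `a_{i+2} = d†(a_i) ≤ d†(a_{i+1}) = a_{i+3}` are strict, because the stopping rule
says exactly that these two values differ. In particular `a_i < a_{i+1}` for all `i ≤ l_p†`,
so each `a_i` with `i ≤ l_p†` is finite; being a value of `d†` (or `p + 1 ≤ n`), it is at most `n`.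
-/

theorem monotone_of_apply_add_two {α : Type*} [Preorder α] {f : α → α} {a : ℕ → α}
    (hf : Monotone f) (ha : ∀ i, a (i + 2) = f (a i)) (h01 : a 0 ≤ a 1) (h12 : a 1 ≤ a 2) :
    Monotone a := by
  refine monotone_nat_of_le_succ fun i => ?_
  induction i using Nat.strong_induction_on with
  | _ i ih =>
    match i with
    | 0 => exact h01
    | 1 => exact h12
    | j + 2 =>
      rw [ha, ha]
      exact hf (ih j (by omega))

section Dual

variable {n : ℤ} {m : ℕ} {s t : ℕ → ℤ}

theorem ddual_mono : Monotone (ddual m s t) := fun _ _ hpq =>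
  Finset.inf_mono fun _ hj => by
    simp only [Finset.mem_filter, Finset.mem_range] at hj ⊢
    exact ⟨hj.1, hpq.trans hj.2⟩

theorem dtW_mono : Monotone (dtW m s t) := by
  intro x y hxy
  induction y using WithTop.recTopCoe with
  | top => exact le_top
  | coe q =>
    induction x using WithTop.recTopCoe with
    | top => simp at hxy
    | coe p => exact ddual_mono (WithTop.coe_le_coe.mp hxy)

theorem le_ddual (hlen : ∀ j < m, s j + 2 ≤ t j) (q : ℤ) :
    ((q + 2 : ℤ) : WithTop ℤ) ≤ ddual m s t q := by
  refine Finset.le_inf fun j hj => ?_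
  rw [Finset.mem_filter, Finset.mem_range] at hj
  exact WithTop.coe_le_coe.mpr (by linarith [hlen j hj.1])

theorem dtW_le_of_ne_top (htn : ∀ j < m, t j ≤ n) {x : WithTop ℤ} (hx : dtW m s t x ≠ ⊤) :
    dtW m s t x ≤ n := by
  induction x using WithTop.recTopCoe with
  | top => exact absurd rfl hx
  | coe q =>
    change ddual m s t q ≠ ⊤ at hx
    obtain ⟨j, hj⟩ : ((Finset.range m).filter (fun j => q ≤ s j)).Nonempty :=
      Finset.nonempty_iff_ne_empty.mpr fun h => hx (by rw [ddual, h, Finset.inf_empty])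
    exact (Finset.inf_le hj).trans
      (WithTop.coe_le_coe.mpr (htn j (Finset.mem_range.mp (Finset.mem_filter.mp hj).1)))

variable {p : ℤ}

theorem aSeqD_one_lt_two (hlen : ∀ j < m, s j + 2 ≤ t j) : aSeqD m s t p 1 < aSeqD m s t p 2 :=
  calc ((p + 1 : ℤ) : WithTop ℤ) < ((p + 2 : ℤ) : WithTop ℤ) := WithTop.coe_lt_coe.mpr (by omega)
    _ ≤ ddual m s t p := le_ddual hlen p

theorem aSeqD_monotone (hlen : ∀ j < m, s j + 2 ≤ t j) : Monotone (aSeqD m s t p) :=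
  monotone_of_apply_add_two dtW_mono (fun _ => rfl)
    (WithTop.coe_le_coe.mpr (by omega)) (aSeqD_one_lt_two hlen).le

theorem dtW_aSeqD_ne_of_add_one_lt_lSeqD {j : ℕ} (hj : j + 1 < lSeqD n m s t p) :
    dtW m s t (aSeqD m s t p j) ≠ dtW m s t (aSeqD m s t p (j + 1)) := by
  have hpn : p ≠ n := by
    rintro rfl
    simp [lSeqD] at hj
  rw [lSeqD, if_neg hpn] at hj
  simpa using Nat.notMem_of_lt_sInf hj

theorem aSeqD_lt_succ (hlen : ∀ j < m, s j + 2 ≤ t j) {i : ℕ} (hi : i ≤ lSeqD n m s t p) :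
    aSeqD m s t p i < aSeqD m s t p (i + 1) :=
  match i, hi with
  | 0, _ => WithTop.coe_lt_coe.mpr (by omega)
  | 1, _ => aSeqD_one_lt_two hlen
  | j + 2, hi => lt_of_le_of_ne (aSeqD_monotone hlen (j + 2).le_succ)
      (dtW_aSeqD_ne_of_add_one_lt_lSeqD (n := n) (by omega))

end Dual

theorem lemma_4_4_dual_general
    (n : ℤ) (m : ℕ) (s t : ℕ → ℤ)
    (htn : ∀ j : ℕ, j < m → t j ≤ n)
    (hlen : ∀ j : ℕ, j < m → s j + 2 ≤ t j)
    (p : ℤ) (hpn : p ≤ n)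
    (i : ℕ) (hi1 : 1 ≤ i) (hil : i ≤ lSeqD n m s t p) :
    aSeqD m s t p i ≠ ⊤ ∧ aSeqD m s t p (i - 1) < aSeqD m s t p i ∧
      aSeqD m s t p i ≤ (n : WithTop ℤ) := by
  have hpn' : p ≠ n := by
    rintro rfl
    simp only [lSeqD, if_pos] at hil
    omega
  obtain ⟨k, rfl⟩ : ∃ k, i = k + 1 := ⟨i - 1, by omega⟩
  have hlt := aSeqD_lt_succ hlen hil
  refine ⟨hlt.ne_top, by simpa using aSeqD_lt_succ hlen (by omega : k ≤ lSeqD n m s t p), ?_⟩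
  rcases k with _ | k
  · exact WithTop.coe_le_coe.mpr (by omega)
  · exact dtW_le_of_ne_top htn hlt.ne_top

theorem lemma_4_4_dual
    (n : ℤ) (m : ℕ) (s t : ℕ → ℤ)
    (hn : 0 ≤ n)
    (hsmono : ∀ i j : ℕ, i < j → j < m → s i < s j)
    (htmono : ∀ i j : ℕ, i < j → j < m → t i < t j)
    (hs0 : ∀ j : ℕ, j < m → 0 ≤ s j)
    (htn : ∀ j : ℕ, j < m → t j ≤ n)
    (hlen : ∀ j : ℕ, j < m → s j + 2 ≤ t j)
    (p : ℤ) (hp0 : 0 ≤ p) (hpn : p ≤ n)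
    (i : ℕ) (hi1 : 1 ≤ i) (hil : i ≤ lSeqD n m s t p) :
    aSeqD m s t p i ≠ ⊤ ∧ aSeqD m s t p (i - 1) < aSeqD m s t p i ∧
      aSeqD m s t p i ≤ (n : WithTop ℤ) :=
  lemma_4_4_dual_general n m s t htn hlen p hpn i hi1 hil
end
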